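/- arXiv:2102.00372 — 2 statements merged into one kernel-verified Lean document; each statement's English description precedes it below -/
import Mathlib

section
/- Let O be the split octonion algebra over a field F (Zorn vector matrices) and O₀ its subspace of trace-zero elements. If V ⊆ O₀ is an F-linear subspace such that x·y = 0 for all x, y ∈ V, then dim_F V ≤ 2. -/
noncomputable section

/-- Dot product on `F³`. -/
def dot3 {F : Type} [Field F] (v w : Fin 3 → F) : F :=
  v 0 * w 0 + v 1 * w 1 + v 2 * w 2

/-- Cross product on `F³`. -/
def cross3 {F : Type} [Field F] (v w : Fin 3 → F) : Fin 3 → F :=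
  ![v 1 * w 2 - v 2 * w 1, v 2 * w 0 - v 0 * w 2, v 0 * w 1 - v 1 * w 0]

/-- Zorn vector matrices `(a, v; w, b)` over `F`: the split octonion algebra. -/
abbrev Zorn (F : Type) : Type := F × (Fin 3 → F) × (Fin 3 → F) × F

/-- Multiplication of Zorn vector matrices:
`(a, v; w, b)·(a', v'; w', b') =
 (aa' + v·w', av' + b'v − w×w'; a'w + bw' + v×v', bb' + w·v')`. -/
def zmul {F : Type} [Field F] (x y : Zorn F) : Zorn F :=
  (x.1 * y.1 + dot3 x.2.1 y.2.2.1,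
   (fun i => x.1 * y.2.1 i + y.2.2.2 * x.2.1 i - cross3 x.2.2.1 y.2.2.1 i),
   (fun i => y.1 * x.2.2.1 i + x.2.2.2 * y.2.2.1 i + cross3 x.2.1 y.2.1 i),
   x.2.2.2 * y.2.2.2 + dot3 x.2.2.1 y.2.1)

/-- Trace of a Zorn matrix: `Tr(a, v; w, b) = a + b`. -/
def ztrace {F : Type} [Field F] (x : Zorn F) : F := x.1 + x.2.2.2

/-!
Write the elements of `V` as `(a, v; w, -a)`. The vector components of `x·y = 0` read
`a v' - a' v = w × w'` and `v × v' = a w' - a' w`, so the `w`'s of the elements with `a = 0`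
are pairwise parallel and span at most a line. If `a` vanishes on all of `V`, the `v`'s are
pairwise parallel as well, and an element with `v = 0` is determined by its `w`. Otherwise pick
`x₁` with `a₁ ≠ 0`: an element with `a = 0` satisfies `a₁ v = w₁ × w`, so again it is determined
by its `w`. In both cases rank–nullity gives `dim V ≤ 1 + 1`.
-/

open Module Matrix

theorem cross3_eq_crossProduct {F : Type} [Field F] (v w : Fin 3 → F) :
    cross3 v w = v ⨯₃ w := by
  rw [cross_apply]; rfl

theorem finrank_range_le_one_of_crossProduct_eq_zero {F M : Type*} [Field F] [AddCommGroup M]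
    [Module F M] (f : M →ₗ[F] Fin 3 → F) (h : ∀ x y, f x ⨯₃ f y = 0) :
    finrank F (LinearMap.range f) ≤ 1 := by
  by_contra! hrange
  obtain ⟨u, hu⟩ := (finrank_pos_iff_exists_ne_zero).mp (zero_lt_one.trans hrange)
  obtain ⟨v, huv⟩ := exists_linearIndependent_pair_of_one_lt_finrank hrange hu
  obtain ⟨_, x, rfl⟩ := u
  obtain ⟨_, y, rfl⟩ := v
  have : LinearIndependent F ![f x, f y] := by
    rw [LinearIndependent.pair_iff] at huv ⊢
    intro s t hst
    exact huv s t (Subtype.ext hst)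
  exact crossProduct_ne_zero_iff_linearIndependent.mpr this (h x y)

theorem finrank_le_two_of_crossProduct_eq_zero_on_ker {F M N : Type*} [Field F]
    [AddCommGroup M] [Module F M] [FiniteDimensional F M] [AddCommGroup N] [Module F N]
    (f : M →ₗ[F] N) (hf : finrank F (LinearMap.range f) ≤ 1) (g : M →ₗ[F] Fin 3 → F)
    (hg : ∀ x ∈ LinearMap.ker f, g x = 0 → x = 0)
    (hcross : ∀ x ∈ LinearMap.ker f, ∀ y ∈ LinearMap.ker f, g x ⨯₃ g y = 0) :
    finrank F M ≤ 2 := by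
  have hinj : Function.Injective (g.comp (LinearMap.ker f).subtype) :=
    (injective_iff_map_eq_zero _).mpr fun x hx => Subtype.ext (hg x x.2 hx)
  have hker : finrank F (LinearMap.ker f) ≤ 1 :=
    (LinearMap.finrank_range_of_inj hinj).symm.trans_le <|
      finrank_range_le_one_of_crossProduct_eq_zero _ fun x y => hcross x x.2 y y.2
  have := f.finrank_range_add_finrank_ker
  omega

namespace Zorn

variable {F : Type} [Field F]

-- The components `a`, `v`, `w` of `(a, v; w, b)`.
def projA : Zorn F →ₗ[F] F := LinearMap.fst F F _

def projV : Zorn F →ₗ[F] (Fin 3 → F) := (LinearMap.fst F _ _).comp (LinearMap.snd F F _)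

def projW : Zorn F →ₗ[F] (Fin 3 → F) :=
  (LinearMap.fst F _ _).comp ((LinearMap.snd F _ _).comp (LinearMap.snd F F _))

theorem eq_zero_of_ztrace_eq_zero {x : Zorn F} (htr : ztrace x = 0) (ha : projA x = 0)
    (hv : projV x = 0) (hw : projW x = 0) : x = 0 := by
  obtain ⟨a, v, w, b⟩ := x
  simp only [ztrace, projA, projV, projW, LinearMap.comp_apply, LinearMap.fst_apply,
    LinearMap.snd_apply] at htr ha hv hw
  subst ha hv hw
  simp_all

theorem sub_smul_projV_of_zmul_eq_zero {x y : Zorn F} (hy : ztrace y = 0) (h : zmul x y = 0) :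
    projA x • projV y - projA y • projV x = projW x ⨯₃ projW y := by
  have hb : y.2.2.2 = -y.1 := by rw [ztrace] at hy; linear_combination hy
  funext i
  have := congrFun (congrArg (fun z : Zorn F => z.2.1) h) i
  simp only [zmul, hb, Prod.snd_zero, Prod.fst_zero, Pi.zero_apply] at this
  simp only [← cross3_eq_crossProduct, projA, projV, projW, LinearMap.comp_apply,
    LinearMap.fst_apply, LinearMap.snd_apply, Pi.sub_apply, Pi.smul_apply, smul_eq_mul]
  linear_combination this

theorem crossProduct_projV_of_zmul_eq_zero {x y : Zorn F} (hx : ztrace x = 0)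
    (h : zmul x y = 0) :
    projV x ⨯₃ projV y = projA x • projW y - projA y • projW x := by
  have hb : x.2.2.2 = -x.1 := by rw [ztrace] at hx; linear_combination hx
  funext i
  have := congrFun (congrArg (fun z : Zorn F => z.2.2.1) h) i
  simp only [zmul, hb, Prod.snd_zero, Prod.fst_zero, Pi.zero_apply] at this
  simp only [← cross3_eq_crossProduct, projA, projV, projW, LinearMap.comp_apply,
    LinearMap.fst_apply, LinearMap.snd_apply, Pi.sub_apply, Pi.smul_apply, smul_eq_mul]
  linear_combination this

variable {V : Submodule F (Zorn F)}

theorem crossProduct_projW_eq_zero (htr : ∀ x ∈ V, ztrace x = 0)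
    (hnull : ∀ x ∈ V, ∀ y ∈ V, zmul x y = 0) {x y : Zorn F} (hx : x ∈ V) (hy : y ∈ V)
    (hxa : projA x = 0) (hya : projA y = 0) : projW x ⨯₃ projW y = 0 := by
  simpa [hxa, hya] using (sub_smul_projV_of_zmul_eq_zero (htr y hy) (hnull x hx y hy)).symm

theorem finrank_le_two_of_forall_projA_eq_zero (htr : ∀ x ∈ V, ztrace x = 0)
    (hnull : ∀ x ∈ V, ∀ y ∈ V, zmul x y = 0) (hA : ∀ x ∈ V, projA x = 0) :
    finrank F V ≤ 2 := by
  refine finrank_le_two_of_crossProduct_eq_zero_on_ker (projV.comp V.subtype) ?_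
    (projW.comp V.subtype) (fun x hx hw => ?_)
    (fun x _ y _ => crossProduct_projW_eq_zero htr hnull x.2 y.2 (hA x x.2) (hA y y.2))
  · refine finrank_range_le_one_of_crossProduct_eq_zero _ fun x y => ?_
    simpa [hA x x.2, hA y y.2] using
      crossProduct_projV_of_zmul_eq_zero (htr x x.2) (hnull x x.2 y y.2)
  · exact Subtype.ext <| eq_zero_of_ztrace_eq_zero (htr x x.2) (hA x x.2) hx hw

theorem finrank_le_two_of_projA_ne_zero (htr : ∀ x ∈ V, ztrace x = 0)
    (hnull : ∀ x ∈ V, ∀ y ∈ V, zmul x y = 0) {x₁ : Zorn F} (hx₁ : x₁ ∈ V) (ha : projA x₁ ≠ 0) :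
    finrank F V ≤ 2 := by
  refine finrank_le_two_of_crossProduct_eq_zero_on_ker (projA.comp V.subtype)
    ((Submodule.finrank_le _).trans (finrank_self F).le) (projW.comp V.subtype)
    (fun x hxa hw => ?_)
    (fun x hxa y hya => crossProduct_projW_eq_zero htr hnull x.2 y.2 hxa hya)
  have hv : projV (x : Zorn F) = 0 := by
    have := sub_smul_projV_of_zmul_eq_zero (htr x x.2) (hnull x₁ hx₁ x x.2)
    rw [show projA (x : Zorn F) = 0 from hxa, show projW (x : Zorn F) = 0 from hw, zero_smul,
      sub_zero, map_zero] at this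
    exact (smul_eq_zero.mp this).resolve_left ha
  exact Subtype.ext <| eq_zero_of_ztrace_eq_zero (htr x x.2) hxa hv hw

end Zorn

/-- if `V` is an `F`-linear subspace of the trace-zero split octonions `O₀`
on which octonion multiplication is identically zero, then `dim_F V ≤ 2`. -/
theorem zorn_null_subspace_dim_le_two {F : Type} [Field F] (V : Submodule F (Zorn F))
    (htr : ∀ x ∈ V, ztrace x = 0)
    (hnull : ∀ x ∈ V, ∀ y ∈ V, zmul x y = 0) :
    Module.finrank F V ≤ 2 := by
  by_cases hA : ∀ x ∈ V, Zorn.projA x = 0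
  · exact Zorn.finrank_le_two_of_forall_projA_eq_zero htr hnull hA
  · push Not at hA
    obtain ⟨x₁, hx₁, ha⟩ := hA
    exact Zorn.finrank_le_two_of_projA_ne_zero htr hnull hx₁ ha
end
end

section
/- Let p be a prime and let H be the Heisenberg group of 3×3 upper unitriangular matrices over 𝔽_p, with center Z (of order p). Let X and Y be maximal abelian subgroups of H, and let ψ_X: X → ℂ^× and ψ_Y: Y → ℂ^× be one-dimensional characters whose restrictions to Z agree and are nontrivial. Then Ind_X^H(ψ_X) and Ind_Y^H(ψ_Y) are isomorphic irreducible representations of H of dimension p. -/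
/-- The Heisenberg group of `3×3` upper unitriangular matrices over `𝔽_p`, with
`(a, b, c)` standing for the matrix `(1, a, c; 0, 1, b; 0, 0, 1)`. -/
def Heis (p : ℕ) : Type := ZMod p × ZMod p × ZMod p

namespace Heis

variable {p : ℕ}

instance : Group (Heis p) where
  mul x y := (x.1 + y.1, x.2.1 + y.2.1, x.2.2 + y.2.2 + x.1 * y.2.1)
  one := ((0 : ZMod p), (0 : ZMod p), (0 : ZMod p))
  inv x := (-x.1, -x.2.1, -x.2.2 + x.1 * x.2.1)
  mul_assoc := by
    rintro ⟨a1, a2, a3⟩ ⟨b1, b2, b3⟩ ⟨c1, c2, c3⟩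
    refine Prod.ext ?_ (Prod.ext ?_ ?_)
    · show a1 + b1 + c1 = a1 + (b1 + c1); ring
    · show a2 + b2 + c2 = a2 + (b2 + c2); ring
    · show a3 + b3 + (a1 * b2) + c3 + (a1 + b1) * c2 =
        a3 + (b3 + c3 + b1 * c2) + a1 * (b2 + c2)
      ring
  one_mul := by
    rintro ⟨a1, a2, a3⟩
    refine Prod.ext ?_ (Prod.ext ?_ ?_)
    · show 0 + a1 = a1; ring
    · show 0 + a2 = a2; ring
    · show 0 + a3 + 0 * a2 = a3; ring
  mul_one := by
    rintro ⟨a1, a2, a3⟩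
    refine Prod.ext ?_ (Prod.ext ?_ ?_)
    · show a1 + 0 = a1; ring
    · show a2 + 0 = a2; ring
    · show a3 + 0 + a1 * 0 = a3; ring
  inv_mul_cancel := by
    rintro ⟨a1, a2, a3⟩
    refine Prod.ext ?_ (Prod.ext ?_ ?_)
    · show -a1 + a1 = 0; ring
    · show -a2 + a2 = 0; ring
    · show -a3 + a1 * a2 + a3 + -a1 * a2 = 0; ring

end Heis

noncomputable section

/-- Two representations are isomorphic if there is an equivariant linear equivalence. -/
def RepIso {k : Type} [CommRing k] {M : Type} [Monoid M]
    {V W : Type} [AddCommGroup V] [Module k V] [AddCommGroup W] [Module k W]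
    (ρ : Representation k M V) (π : Representation k M W) : Prop :=
  ∃ e : V ≃ₗ[k] W, ∀ (m : M) (v : V), e (ρ m v) = π m (e v)

/-- A representation is irreducible if the space is nonzero and the only invariant
subspaces are `⊥` and `⊤`. -/
def IsIrred {k : Type} [CommRing k] {M : Type} [Monoid M]
    {V : Type} [AddCommGroup V] [Module k V] (ρ : Representation k M V) : Prop :=
  Nontrivial V ∧
    ∀ p : Submodule k V, (∀ (m : M) (v : V), v ∈ p → ρ m v ∈ p) → p = ⊥ ∨ p = ⊤

variable {G : Type} [Group G]

/-- The underlying space of the induced representation `Ind_H^G τ`: functions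
`f : G → V` with `f(hg) = τ(h) f(g)`. -/
def IndCar {V : Type} [AddCommGroup V] [Module ℂ V] (H : Subgroup G)
    (τ : Representation ℂ H V) : Submodule ℂ (G → V) where
  carrier := {f | ∀ (h : H) (g : G), f (↑h * g) = τ h (f g)}
  add_mem' := by
    intro a b ha hb h g
    simp only [Pi.add_apply, ha h g, hb h g, map_add]
  zero_mem' := by intro h g; simp
  smul_mem' := by
    intro c f hf h g
    simp only [Pi.smul_apply, hf h g, map_smul]

/-- The induced representation `Ind_H^G τ`, with `G` acting by right translation. -/
def IndRep {V : Type} [AddCommGroup V] [Module ℂ V] (H : Subgroup G)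
    (τ : Representation ℂ H V) : Representation ℂ G (IndCar H τ) where
  toFun x :=
    { toFun := fun f => ⟨fun g => (f : G → V) (g * x), fun h g => by
        show (f : G → V) (↑h * g * x) = τ h ((f : G → V) (g * x))
        rw [mul_assoc]; exact f.2 h (g * x)⟩
      map_add' := fun _ _ => rfl
      map_smul' := fun _ _ => rfl }
  map_one' := by
    apply LinearMap.ext; intro f; apply Subtype.ext; funext g
    simp [mul_one]
  map_mul' := by
    intro x y
    apply LinearMap.ext; intro f; apply Subtype.ext; funext g
    simp [mul_assoc]

/-- The one-dimensional representation attached to a character `χ : M →* ℂˣ`. -/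
def charRep {M : Type} [Monoid M] (χ : M →* ℂˣ) : Representation ℂ M ℂ where
  toFun m := (χ m : ℂ) • LinearMap.id
  map_one' := by simp [Module.End.one_eq_id]
  map_mul' := by
    intro x y
    apply LinearMap.ext; intro v
    simp [Module.End.mul_apply, smul_smul, mul_comm]

variable {p : ℕ}

/-- A subgroup is maximal abelian if it is abelian and not properly contained in any
abelian subgroup. -/
def IsMaximalAbelian {G : Type} [Group G] (X : Subgroup G) : Prop :=
  (∀ a ∈ X, ∀ b ∈ X, a * b = b * a) ∧
    ∀ X' : Subgroup G, (∀ a ∈ X', ∀ b ∈ X', a * b = b * a) → X ≤ X' → X' = X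


/-!
Every maximal abelian subgroup `X` of `H` is the centralizer of a non-central element; hence it
is normal of index `p` and contains `Z`, and two distinct ones meet in `Z`. For `g ∉ X`,
conjugation by `g` multiplies `ψ_X` by the character `ψ_X ∘ [g, ·]` of `X`, which is nontrivial
because `ψ_X` is injective on `Z ≅ 𝔽_p`. So averaging against `ψ_X` over `X` sends any nonzero
`f ∈ Ind` to a multiple of `ψ_X` extended by zero, whose translates span `Ind`: the induced
representation is irreducible. If `X ≠ Y`, the intertwiner `f ↦ ∑_{y ∈ Y} ψ_Y(y)⁻¹ f(y ·)` is
nonzero because `ψ_X = ψ_Y` on `X ∩ Y = Z`, and Schur's lemma gives the isomorphism; for `X = Y`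
one passes through a coordinate subgroup `W ≠ X`.
-/

section Representation

variable {k : Type} [CommRing k] {M : Type} [Monoid M] {V W U : Type}
  [AddCommGroup V] [Module k V] [AddCommGroup W] [Module k W] [AddCommGroup U] [Module k U]
  {ρ : Representation k M V} {π : Representation k M W} {σ : Representation k M U}

lemma RepIso.trans (h₁ : RepIso ρ π) (h₂ : RepIso π σ) : RepIso ρ σ := by
  obtain ⟨e₁, he₁⟩ := h₁
  obtain ⟨e₂, he₂⟩ := h₂
  exact ⟨e₁.trans e₂, fun m v => by simp [he₁, he₂]⟩

lemma RepIso.of_isIrred (hρ : IsIrred ρ) (hπ : IsIrred π) (T : V →ₗ[k] W)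
    (hT : ∀ m v, T (ρ m v) = π m (T v)) (hT₀ : T ≠ 0) : RepIso ρ π := by
  have hker : LinearMap.ker T = ⊥ := by
    refine (hρ.2 _ fun m v hv => ?_).resolve_right fun h => hT₀ (LinearMap.ker_eq_top.mp h)
    rw [LinearMap.mem_ker] at hv ⊢
    rw [hT, hv, map_zero]
  have hrange : LinearMap.range T = ⊤ := by
    refine (hπ.2 _ fun m w hw => ?_).resolve_left fun h => hT₀ (LinearMap.range_eq_bot.mp h)
    obtain ⟨v, rfl⟩ := hw
    exact ⟨ρ m v, hT m v⟩
  exact ⟨.ofBijective T ⟨LinearMap.ker_eq_bot.mp hker, LinearMap.range_eq_top.mp hrange⟩, hT⟩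

end Representation

lemma MonoidHom.injective_of_ne_one {A N : Type} [Group A] [Group N] [Fact (Nat.card A).Prime]
    (χ : A →* N) (hχ : χ ≠ 1) : Function.Injective χ :=
  (MonoidHom.ker_eq_bot_iff χ).mp <| χ.ker.eq_bot_or_eq_top_of_prime_card.resolve_right
    fun h => hχ (MonoidHom.ker_eq_top_iff.mp h)

section Induced

@[simp] lemma charRep_apply {A : Type} [Monoid A] (χ : A →* ℂˣ) (a : A) (v : ℂ) :
    charRep χ a v = χ a * v := rfl

@[simp] lemma indRep_apply {V : Type} [AddCommGroup V] [Module ℂ V] (X : Subgroup G)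
    (τ : Representation ℂ X V) (g : G) (f : IndCar X τ) (h : G) :
    (IndRep X τ g f : G → V) h = (f : G → V) (h * g) := rfl

variable {X Y : Subgroup G}

lemma indCar_apply_mul {ψ : X →* ℂˣ} (f : IndCar X (charRep ψ)) (x : X) (g : G) :
    (f : G → ℂ) (x * g) = ψ x * (f : G → ℂ) g :=
  f.2 x g

lemma indCar_apply_of_mem {ψ : X →* ℂˣ} (f : IndCar X (charRep ψ)) {g : G} (hg : g ∈ X) :
    (f : G → ℂ) g = ψ ⟨g, hg⟩ * (f : G → ℂ) 1 := by
  simpa using indCar_apply_mul f ⟨g, hg⟩ 1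

variable (ψ : X →* ℂˣ)

open Classical in
def extendByZero : IndCar X (charRep ψ) :=
  ⟨fun g => if hg : g ∈ X then (ψ ⟨g, hg⟩ : ℂ) else 0, fun x g => by
    by_cases hg : g ∈ X
    · have hxg : ↑x * g ∈ X := mul_mem x.2 hg
      simp only [hg, hxg, dite_true, charRep_apply, ← Units.val_mul, ← map_mul]
      rfl
    · have hxg : ↑x * g ∉ X := fun h => hg (by simpa using mul_mem (inv_mem x.2) h)
      simp [hg, hxg]⟩

lemma extendByZero_apply_of_mem {g : G} (hg : g ∈ X) :
    (extendByZero ψ : G → ℂ) g = ψ ⟨g, hg⟩ :=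
  dif_pos hg

lemma extendByZero_apply_of_not_mem {g : G} (hg : g ∉ X) : (extendByZero ψ : G → ℂ) g = 0 :=
  dif_neg hg

lemma extendByZero_ne_zero : extendByZero ψ ≠ 0 := fun h => by
  simpa [extendByZero_apply_of_mem ψ X.one_mem] using congrFun (congrArg Subtype.val h) 1

lemma coe_sum_apply {V : Type} [AddCommGroup V] [Module ℂ V] {τ : Representation ℂ X V}
    {ι : Type} (s : Finset ι) (f : ι → IndCar X τ) (g : G) :
    ((∑ i ∈ s, f i : IndCar X τ) : G → V) g = ∑ i ∈ s, (f i : G → V) g := by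
  rw [Submodule.coe_sum, Finset.sum_apply]

lemma sum_smul_indRep_extendByZero [Fintype G] (f : IndCar X (charRep ψ)) :
    ∑ g, (f : G → ℂ) g • IndRep X (charRep ψ) g⁻¹ (extendByZero ψ) = (Nat.card X : ℂ) • f := by
  classical
  ext h
  rw [coe_sum_apply]
  have hterm : ∀ g, (((f : G → ℂ) g • IndRep X (charRep ψ) g⁻¹ (extendByZero ψ) :
      IndCar X (charRep ψ)) : G → ℂ) h =
      if h * g⁻¹ ∈ X then (f : G → ℂ) h else 0 := by
    intro g
    simp only [SetLike.val_smul, Pi.smul_apply, indRep_apply, smul_eq_mul]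
    split_ifs with hX
    · have hgh : g * h⁻¹ ∈ X := by simpa using inv_mem hX
      have hfg : (f : G → ℂ) g = ψ ⟨_, hgh⟩ * (f : G → ℂ) h := by
        simpa using indCar_apply_mul f ⟨_, hgh⟩ h
      have hinv : (⟨g * h⁻¹, hgh⟩ * ⟨h * g⁻¹, hX⟩ : X) = 1 := Subtype.ext (by simp [mul_assoc])
      rw [extendByZero_apply_of_mem ψ hX, hfg, mul_right_comm, ← Units.val_mul, ← map_mul, hinv,
        map_one, Units.val_one, one_mul]
    · rw [extendByZero_apply_of_not_mem ψ hX, mul_zero]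
  rw [Finset.sum_congr rfl fun g _ => hterm g,
    Fintype.sum_equiv ((Equiv.inv G).trans (Equiv.mulLeft h))
      (fun g => if h * g⁻¹ ∈ X then (f : G → ℂ) h else 0)
      (fun k => if k ∈ X then (f : G → ℂ) h else 0) fun g => rfl,
    ← Finset.sum_filter, Finset.sum_const, ← Fintype.card_subtype, ← Nat.card_eq_fintype_card]
  simp

section Normal

variable [X.Normal]

def conjDivChar (g : G) : X →* ℂ :=
  (Units.coeHom ℂ).comp (ψ.comp (MulAut.conjNormal g).toMonoidHom / ψ)

lemma conjDivChar_apply (g : G) (x : X) :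
    conjDivChar ψ g x = ψ (MulAut.conjNormal g x) * ψ x⁻¹ := by
  simp [conjDivChar, div_eq_mul_inv]

lemma conjDivChar_of_mem {g : G} (hg : g ∈ X) : conjDivChar ψ g = 1 := by
  ext x
  have hconj : MulAut.conjNormal g x = ⟨g, hg⟩ * x * ⟨g, hg⟩⁻¹ := Subtype.ext (by simp)
  rw [conjDivChar_apply, hconj, map_mul, map_mul, map_inv, mul_inv_cancel_comm, ← Units.val_mul,
    ← map_mul, mul_inv_cancel, map_one, Units.val_one, MonoidHom.one_apply]

lemma conjDivChar_ne_one {g : G} (h : ∃ x : X, ψ (MulAut.conjNormal g x) ≠ ψ x) :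
    conjDivChar ψ g ≠ 1 := by
  obtain ⟨x, hx⟩ := h
  intro h1
  have := DFunLike.congr_fun h1 x
  rw [conjDivChar_apply, MonoidHom.one_apply, map_inv, ← Units.val_mul, ← Units.val_one,
    Units.val_inj, mul_inv_eq_one] at this
  exact hx this

lemma indCar_apply_mul_of_normal (f : IndCar X (charRep ψ)) (g : G) (x : X) :
    (f : G → ℂ) (g * x) = ψ (MulAut.conjNormal g x) * (f : G → ℂ) g := by
  simpa using indCar_apply_mul f (MulAut.conjNormal g x) g

/-- Off `X` the average vanishes, `conjDivChar ψ g` being a nontrivial character for `g ∉ X`. -/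
lemma sum_smul_indRep_eq_smul_extendByZero [Fintype X]
    (hψ : ∀ g ∉ X, ∃ x : X, ψ (MulAut.conjNormal g x) ≠ ψ x) (f : IndCar X (charRep ψ)) :
    ∑ x : X, (ψ x⁻¹ : ℂ) • IndRep X (charRep ψ) x f =
      ((Nat.card X : ℂ) * (f : G → ℂ) 1) • extendByZero ψ := by
  ext g
  have hsum : ((∑ x : X, (ψ x⁻¹ : ℂ) • IndRep X (charRep ψ) x f : IndCar X (charRep ψ)) :
      G → ℂ) g = (∑ x : X, conjDivChar ψ g x) * (f : G → ℂ) g := by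
    rw [coe_sum_apply, Finset.sum_mul]
    refine Finset.sum_congr rfl fun x _ => ?_
    simp only [SetLike.val_smul, Pi.smul_apply, indRep_apply, smul_eq_mul,
      indCar_apply_mul_of_normal, conjDivChar_apply]
    ring
  rw [hsum, SetLike.val_smul, Pi.smul_apply, smul_eq_mul]
  by_cases hg : g ∈ X
  · rw [conjDivChar_of_mem ψ hg, extendByZero_apply_of_mem ψ hg, indCar_apply_of_mem f hg]
    simp [Nat.card_eq_fintype_card]
    ring
  · rw [sum_hom_units_eq_zero _ (conjDivChar_ne_one ψ (hψ g hg)),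
      extendByZero_apply_of_not_mem ψ hg]
    simp

theorem isIrred_indRep_of_normal [Finite G]
    (hψ : ∀ g ∉ X, ∃ x : X, ψ (MulAut.conjNormal g x) ≠ ψ x) : IsIrred (IndRep X (charRep ψ)) := by
  classical
  cases nonempty_fintype G
  have hX : (Nat.card X : ℂ) ≠ 0 := Nat.cast_ne_zero.mpr Nat.card_pos.ne'
  refine ⟨⟨_, _, extendByZero_ne_zero ψ⟩, fun W hW => or_iff_not_imp_left.mpr fun hW₀ => ?_⟩
  obtain ⟨f, hfW, hf⟩ := W.ne_bot_iff.mp hW₀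
  obtain ⟨g₀, hg₀⟩ : ∃ g₀, (f : G → ℂ) g₀ ≠ 0 := by
    by_contra! h
    exact hf (Subtype.ext (funext h))
  have he : extendByZero ψ ∈ W := by
    have hsum := W.sum_mem (t := Finset.univ) fun x _ =>
      W.smul_mem (ψ x⁻¹ : ℂ) (hW x _ (hW g₀ f hfW))
    rw [sum_smul_indRep_eq_smul_extendByZero ψ hψ] at hsum
    exact (W.smul_mem_iff (mul_ne_zero hX (by simpa using hg₀))).mp hsum
  refine eq_top_iff.mpr fun f _ => (W.smul_mem_iff hX).mp ?_
  rw [← sum_smul_indRep_extendByZero]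
  exact W.sum_mem fun g _ => W.smul_mem _ (hW _ _ he)

end Normal

section Intertwiner

variable (ψX : X →* ℂˣ) (ψY : Y →* ℂˣ)

/-- The intertwiner attached to the double coset `X * Y` in Mackey's formula. -/
def leftAverage [Fintype Y] : IndCar X (charRep ψX) →ₗ[ℂ] IndCar Y (charRep ψY) where
  toFun f := ⟨fun g => ∑ y : Y, (ψY y⁻¹ : ℂ) * (f : G → ℂ) (y * g), fun y₀ g => by
    simp only [charRep_apply, Finset.mul_sum]
    refine Fintype.sum_equiv (Equiv.mulRight y₀) _ _ fun y => ?_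
    simp [mul_assoc]⟩
  map_add' f f' := by
    ext g
    simp [mul_add, Finset.sum_add_distrib]
  map_smul' c f := by
    ext g
    simp [Finset.mul_sum, mul_left_comm]

variable [Fintype Y]

lemma leftAverage_indRep (m : G) (f : IndCar X (charRep ψX)) :
    leftAverage ψX ψY (IndRep X (charRep ψX) m f) =
      IndRep Y (charRep ψY) m (leftAverage ψX ψY f) := by
  ext g
  simp [leftAverage, mul_assoc]

lemma leftAverage_extendByZero_ne_zero
    (h : ∀ g (hgX : g ∈ X) (hgY : g ∈ Y), ψX ⟨g, hgX⟩ = ψY ⟨g, hgY⟩) :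
    leftAverage ψX ψY (extendByZero ψX) ≠ 0 := by
  classical
  intro h0
  have h1 : ∑ y : Y, (ψY y⁻¹ : ℂ) * (extendByZero ψX : G → ℂ) (y * 1) = 0 :=
    congrFun (congrArg Subtype.val h0) 1
  have hterm : ∀ y : Y, (ψY y⁻¹ : ℂ) * (extendByZero ψX : G → ℂ) (y * 1) =
      if (y : G) ∈ X then 1 else 0 := by
    intro y
    rw [mul_one]
    split_ifs with hy
    · rw [extendByZero_apply_of_mem ψX hy, h _ hy y.2, ← Units.val_mul, ← map_mul,
        inv_mul_cancel, map_one, Units.val_one]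
    · rw [extendByZero_apply_of_not_mem ψX hy, mul_zero]
  rw [Finset.sum_congr rfl fun y _ => hterm y, Finset.sum_boole, Nat.cast_eq_zero,
    Finset.card_eq_zero, Finset.filter_eq_empty_iff] at h1
  exact h1 (Finset.mem_univ 1) X.one_mem

end Intertwiner

theorem repIso_indRep_of_isIrred [Finite G] {ψX : X →* ℂˣ} {ψY : Y →* ℂˣ}
    (hX : IsIrred (IndRep X (charRep ψX))) (hY : IsIrred (IndRep Y (charRep ψY)))
    (h : ∀ g (hgX : g ∈ X) (hgY : g ∈ Y), ψX ⟨g, hgX⟩ = ψY ⟨g, hgY⟩) :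
    RepIso (IndRep X (charRep ψX)) (IndRep Y (charRep ψY)) := by
  classical
  cases nonempty_fintype G
  exact RepIso.of_isIrred hX hY (leftAverage ψX ψY) (leftAverage_indRep ψX ψY)
    fun h0 => leftAverage_extendByZero_ne_zero ψX ψY h (by rw [h0, LinearMap.zero_apply])

section Dimension

lemma rightRel_mk_mul (x : X) (g : G) :
    (Quotient.mk'' (x * g) : Quotient (QuotientGroup.rightRel X)) = Quotient.mk'' g :=
  Quotient.sound' (QuotientGroup.rightRel_apply.mpr (by simp [inv_mem x.2]))

def rightCosetPart (g : G) : X :=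
  ⟨g * (Quotient.mk'' g : Quotient (QuotientGroup.rightRel X)).out⁻¹,
    QuotientGroup.rightRel_apply.mp (Quotient.mk_out' g)⟩

lemma rightCosetPart_mul_out (g : G) :
    (rightCosetPart (X := X) g : G) *
      (Quotient.mk'' g : Quotient (QuotientGroup.rightRel X)).out = g :=
  inv_mul_cancel_right g _

lemma rightCosetPart_mul (x : X) (g : G) : rightCosetPart (x * g) = x * rightCosetPart g := by
  apply Subtype.ext
  simp only [rightCosetPart, rightRel_mk_mul, Subgroup.coe_mul, mul_assoc]

lemma rightCosetPart_out (q : Quotient (QuotientGroup.rightRel X)) :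
    rightCosetPart (X := X) q.out = 1 := by
  apply Subtype.ext
  simp [rightCosetPart]

def indCarEquiv (ψ : X →* ℂˣ) :
    IndCar X (charRep ψ) ≃ₗ[ℂ] (Quotient (QuotientGroup.rightRel X) → ℂ) where
  toFun f q := (f : G → ℂ) q.out
  map_add' _ _ := rfl
  map_smul' _ _ := rfl
  invFun φ := ⟨fun g => ψ (rightCosetPart g) * φ (Quotient.mk'' g), fun x g => by
    simp [rightCosetPart_mul, rightRel_mk_mul, mul_assoc]⟩
  left_inv f := by
    ext g
    conv_rhs => rw [← rightCosetPart_mul_out (X := X) g, indCar_apply_mul]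
  right_inv φ := by
    ext q
    simp [rightCosetPart_out]

theorem finrank_indCar [Finite G] (ψ : X →* ℂˣ) :
    Module.finrank ℂ (IndCar X (charRep ψ)) = X.index := by
  classical
  cases nonempty_fintype (Quotient (QuotientGroup.rightRel X))
  rw [(indCarEquiv ψ).finrank_eq, Module.finrank_fintype_fun_eq_card, ← Nat.card_eq_fintype_card,
    Subgroup.index_eq_card, Nat.card_congr (QuotientGroup.quotientRightRelEquivQuotientLeftRel X)]

end Dimension

end Induced

open Subgroup

namespace Heis

lemma ext {g h : Heis p} (h₁ : g.1 = h.1) (h₂ : g.2.1 = h.2.1) (h₃ : g.2.2 = h.2.2) : g = h :=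
  Prod.ext h₁ (Prod.ext h₂ h₃)

@[simp] lemma mul_fst (g h : Heis p) : (g * h).1 = g.1 + h.1 := rfl
@[simp] lemma mul_snd_fst (g h : Heis p) : (g * h).2.1 = g.2.1 + h.2.1 := rfl
@[simp] lemma mul_snd_snd (g h : Heis p) : (g * h).2.2 = g.2.2 + h.2.2 + g.1 * h.2.1 := rfl
@[simp] lemma one_fst : (1 : Heis p).1 = 0 := rfl
@[simp] lemma one_snd_fst : (1 : Heis p).2.1 = 0 := rfl
@[simp] lemma one_snd_snd : (1 : Heis p).2.2 = 0 := rfl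
@[simp] lemma inv_fst (g : Heis p) : g⁻¹.1 = -g.1 := rfl
@[simp] lemma inv_snd_fst (g : Heis p) : g⁻¹.2.1 = -g.2.1 := rfl
@[simp] lemma inv_snd_snd (g : Heis p) : g⁻¹.2.2 = -g.2.2 + g.1 * g.2.1 := rfl

instance [NeZero p] : Fintype (Heis p) := inferInstanceAs (Fintype (ZMod p × ZMod p × ZMod p))

def central (c : ZMod p) : Heis p := (0, 0, c)

@[simp] lemma central_fst (c : ZMod p) : (central c).1 = 0 := rfl
@[simp] lemma central_snd_fst (c : ZMod p) : (central c).2.1 = 0 := rfl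
@[simp] lemma central_snd_snd (c : ZMod p) : (central c).2.2 = c := rfl

lemma central_add (a b : ZMod p) : central (a + b) = central a * central b :=
  ext (by simp) (by simp) (by simp)

def genA : Heis p := (1, 0, 0)

def genB : Heis p := (0, 1, 0)

def pairing (g h : Heis p) : ZMod p := g.1 * h.2.1 - h.1 * g.2.1

lemma pairing_genA (g : Heis p) : pairing genA g = g.2.1 := by
  simp [pairing, genA]

lemma pairing_genB (g : Heis p) : pairing genB g = -g.1 := by
  simp [pairing, genB]

lemma conj_eq (g h : Heis p) : g * h * g⁻¹ = central (pairing g h) * h := by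
  refine ext ?_ ?_ ?_ <;> simp [pairing]
  ring

lemma commute_iff {g h : Heis p} : Commute g h ↔ pairing g h = 0 := by
  have : g * h = h * g ↔ g.2.2 + h.2.2 + g.1 * h.2.1 = h.2.2 + g.2.2 + h.1 * g.2.1 :=
    ⟨congrArg (fun k : Heis p => k.2.2),
      ext (g := g * h) (h := h * g) (add_comm _ _) (add_comm _ _)⟩
  rw [Commute, SemiconjBy, this, pairing]
  constructor <;> intro h <;> linear_combination h

lemma mem_center_iff {g : Heis p} : g ∈ center (Heis p) ↔ g.1 = 0 ∧ g.2.1 = 0 := by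
  simp only [Subgroup.mem_center_iff]
  refine ⟨fun hg => ?_, fun hg h => commute_iff.mpr ?_⟩
  · have hA := commute_iff.mp (hg genA)
    have hB := commute_iff.mp (hg genB)
    rw [pairing_genA] at hA
    rw [pairing_genB, neg_eq_zero] at hB
    exact ⟨hB, hA⟩
  · simp [pairing, hg.1, hg.2]

lemma central_mem_center (c : ZMod p) : central c ∈ center (Heis p) :=
  mem_center_iff.mpr ⟨rfl, rfl⟩

lemma eq_central_of_mem_center {g : Heis p} (hg : g ∈ center (Heis p)) : g = central g.2.2 :=
  ext (mem_center_iff.mp hg).1 (mem_center_iff.mp hg).2 rfl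

lemma card_center : Nat.card (center (Heis p)) = p := by
  refine (Nat.card_congr ?_).trans (Nat.card_zmod p)
  exact
    { toFun := fun g => (g : Heis p).2.2
      invFun := fun c => ⟨central c, central_mem_center c⟩
      left_inv := fun g => Subtype.ext (eq_central_of_mem_center g.2).symm
      right_inv := fun c => rfl }

lemma mem_centralizer_iff {x g : Heis p} : g ∈ centralizer {x} ↔ pairing x g = 0 := by
  rw [mem_centralizer_singleton_iff, ← commute_iff]
  exact eq_comm

lemma mem_centralizer_genA {g : Heis p} : g ∈ centralizer {genA} ↔ g.2.1 = 0 := by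
  rw [mem_centralizer_iff, pairing_genA]

lemma mem_centralizer_genB {g : Heis p} : g ∈ centralizer {genB} ↔ g.1 = 0 := by
  rw [mem_centralizer_iff, pairing_genB, neg_eq_zero]

def pairingHom (x : Heis p) : Heis p →* Multiplicative (ZMod p) where
  toFun g := Multiplicative.ofAdd (pairing x g)
  map_one' := by simp [pairing]
  map_mul' g h := by
    rw [← ofAdd_add]
    congr 1
    simp only [pairing, mul_fst, mul_snd_fst]
    ring

lemma ker_pairingHom (x : Heis p) : (pairingHom x).ker = centralizer {x} := by
  ext g
  rw [MonoidHom.mem_ker, mem_centralizer_iff]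
  exact ofAdd_eq_one

def lastCoordChar {W X : Subgroup (Heis p)} (hW : ∀ g ∈ W, ∀ h ∈ W, g.1 * h.2.1 = 0)
    (hX : center (Heis p) ≤ X) (ψ : X →* ℂˣ) : W →* ℂˣ where
  toFun g := ψ ⟨central (g : Heis p).2.2, hX (central_mem_center _)⟩
  map_one' := by
    rw [← ψ.map_one]
    rfl
  map_mul' g h := by
    rw [← map_mul]
    congr 1
    apply Subtype.ext
    simp [hW g g.2 h h.2, central_add]

variable [Fact p.Prime]

lemma genA_not_mem_center : genA ∉ center (Heis p) :=
  fun h => one_ne_zero (mem_center_iff.mp h).1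

lemma genB_not_mem_center : genB ∉ center (Heis p) :=
  fun h => one_ne_zero (mem_center_iff.mp h).2

lemma commute_trans {x g h : Heis p} (hx : x ∉ center (Heis p)) (hg : Commute x g)
    (hh : Commute x h) : Commute g h := by
  rw [commute_iff, pairing] at *
  rw [mem_center_iff, not_and_or] at hx
  rcases hx with hx | hx
  · exact (mul_eq_zero.mp (by linear_combination g.1 * hh - h.1 * hg :
      x.1 * (g.1 * h.2.1 - h.1 * g.2.1) = 0)).resolve_left hx
  · exact (mul_eq_zero.mp (by linear_combination g.2.1 * hh - h.2.1 * hg :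
      x.2.1 * (g.1 * h.2.1 - h.1 * g.2.1) = 0)).resolve_left hx

lemma pairingHom_surjective {x : Heis p} (hx : x ∉ center (Heis p)) :
    Function.Surjective (pairingHom x) := by
  intro c
  rw [mem_center_iff, not_and_or] at hx
  rcases hx with hx | hx
  · refine ⟨(0, c.toAdd / x.1, 0), congrArg Multiplicative.ofAdd ?_⟩
    show x.1 * (c.toAdd / x.1) - 0 * x.2.1 = c.toAdd
    field_simp
    ring
  · refine ⟨(-(c.toAdd / x.2.1), 0, 0), congrArg Multiplicative.ofAdd ?_⟩
    show x.1 * 0 - -(c.toAdd / x.2.1) * x.2.1 = c.toAdd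
    field_simp
    ring

lemma index_centralizer {x : Heis p} (hx : x ∉ center (Heis p)) :
    (centralizer {x}).index = p := by
  rw [← ker_pairingHom, index_ker,
    MonoidHom.range_eq_top_of_surjective _ (pairingHom_surjective hx), card_top,
    Nat.card_eq_fintype_card, Fintype.card_multiplicative, ZMod.card]

lemma isMaximalAbelian_centralizer {x : Heis p} (hx : x ∉ center (Heis p)) :
    IsMaximalAbelian (centralizer {x}) := by
  refine ⟨fun a ha b hb => (commute_trans hx (mem_centralizer_singleton_iff.mp ha).symm
    (mem_centralizer_singleton_iff.mp hb).symm).eq, fun X' hX' hle => le_antisymm ?_ hle⟩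
  exact fun g hg => mem_centralizer_singleton_iff.mpr
    (hX' g hg x (hle (mem_centralizer_singleton_iff.mpr rfl)))

end Heis

namespace IsMaximalAbelian

open Heis

variable [Fact p.Prime] {X Y : Subgroup (Heis p)}

lemma eq_centralizer (hX : IsMaximalAbelian X) {x : Heis p} (hxX : x ∈ X)
    (hx : x ∉ center (Heis p)) : X = centralizer {x} :=
  (hX.2 _ (isMaximalAbelian_centralizer hx).1
    fun g hg => mem_centralizer_singleton_iff.mpr (hX.1 g hg x hxX)).symm

lemma exists_eq_centralizer (hX : IsMaximalAbelian X) :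
    ∃ x, x ∉ center (Heis p) ∧ X = centralizer {x} := by
  suffices ∃ x ∈ X, x ∉ center (Heis p) by
    obtain ⟨x, hxX, hx⟩ := this
    exact ⟨x, hx, hX.eq_centralizer hxX hx⟩
  by_contra! hXZ
  have hXA : centralizer {genA} = X := hX.2 _ (isMaximalAbelian_centralizer genA_not_mem_center).1
    (le_trans hXZ (center_le_centralizer _))
  exact genA_not_mem_center (hXZ _ (hXA ▸ mem_centralizer_singleton_iff.mpr rfl))

lemma index_eq (hX : IsMaximalAbelian X) : X.index = p := by
  obtain ⟨x, hx, rfl⟩ := hX.exists_eq_centralizer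
  exact index_centralizer hx

lemma normal (hX : IsMaximalAbelian X) : X.Normal := by
  obtain ⟨x, -, rfl⟩ := hX.exists_eq_centralizer
  rw [← ker_pairingHom]
  exact MonoidHom.normal_ker _

lemma center_le (hX : IsMaximalAbelian X) : center (Heis p) ≤ X := by
  obtain ⟨x, -, rfl⟩ := hX.exists_eq_centralizer
  exact center_le_centralizer _

lemma inf_le_center (hX : IsMaximalAbelian X) (hY : IsMaximalAbelian Y) (hXY : X ≠ Y) :
    X ⊓ Y ≤ center (Heis p) := by
  by_contra! h
  obtain ⟨g, ⟨hgX, hgY⟩, hg⟩ := Set.not_subset.mp h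
  exact hXY ((hX.eq_centralizer hgX hg).trans (hY.eq_centralizer hgY hg).symm)

lemma isIrred_indRep (hX : IsMaximalAbelian X) {ψ : X →* ℂˣ}
    (hψ : ∃ z ∈ center (Heis p), ∃ hzX : z ∈ X, ψ ⟨z, hzX⟩ ≠ 1) :
    IsIrred (IndRep X (charRep ψ)) := by
  have : X.Normal := hX.normal
  have : Fact (Nat.card (center (Heis p))).Prime := ⟨card_center.symm ▸ Fact.out⟩
  set χ := ψ.comp (inclusion hX.center_le)
  have hχ : Function.Injective χ := χ.injective_of_ne_one fun h => by
    obtain ⟨z, hz, hzX, hψz⟩ := hψ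
    exact hψz (DFunLike.congr_fun h ⟨z, hz⟩)
  obtain ⟨x, hx, hXx⟩ := hX.exists_eq_centralizer
  have hxX : x ∈ X := hXx ▸ mem_centralizer_singleton_iff.mpr rfl
  refine isIrred_indRep_of_normal ψ fun g hg => ⟨⟨x, hxX⟩, ?_⟩
  have hc : central (pairing g x) ≠ 1 := fun h => hg <| hXx ▸ mem_centralizer_singleton_iff.mpr
    (commute_iff.mpr (by simpa using congrArg (fun k : Heis p => k.2.2) h)).eq
  have hconj : MulAut.conjNormal g ⟨x, hxX⟩ =
      inclusion hX.center_le ⟨_, central_mem_center (pairing g x)⟩ * ⟨x, hxX⟩ :=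
    Subtype.ext (by simp [conj_eq])
  rw [hconj, map_mul, mul_ne_right]
  exact fun h => hc (congrArg Subtype.val (hχ (h.trans χ.map_one.symm)))

lemma exists_ne (hX : IsMaximalAbelian X) (ψ : X →* ℂˣ) :
    ∃ W, IsMaximalAbelian W ∧ W ≠ X ∧ ∃ ψW : W →* ℂˣ,
      ∀ z ∈ center (Heis p), ∀ (hzX : z ∈ X) (hzW : z ∈ W), ψ ⟨z, hzX⟩ = ψW ⟨z, hzW⟩ := by
  obtain ⟨e, he, hW, hne⟩ : ∃ e : Heis p, e ∉ center (Heis p) ∧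
      (∀ g ∈ centralizer {e}, ∀ h ∈ centralizer {e}, g.1 * h.2.1 = 0) ∧ centralizer {e} ≠ X := by
    by_cases hA : centralizer {genA} = X
    · refine ⟨genB, genB_not_mem_center,
        fun g hg _ _ => by rw [mem_centralizer_genB.mp hg, zero_mul], fun hB => ?_⟩
      have : genA ∈ centralizer {genB} := hB ▸ hA ▸ mem_centralizer_singleton_iff.mpr rfl
      exact one_ne_zero (mem_centralizer_genB.mp this)
    · exact ⟨genA, genA_not_mem_center,
        fun _ _ h hh => by rw [mem_centralizer_genA.mp hh, mul_zero], hA⟩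
  exact ⟨_, isMaximalAbelian_centralizer he, hne, lastCoordChar hW hX.center_le ψ,
    fun z hz _ _ => congrArg ψ (Subtype.ext (eq_central_of_mem_center hz))⟩

lemma repIso_indRep_of_ne (hX : IsMaximalAbelian X) (hY : IsMaximalAbelian Y) (hXY : X ≠ Y)
    {ψX : X →* ℂˣ} {ψY : Y →* ℂˣ}
    (hagree : ∀ z ∈ center (Heis p), ∀ (hzX : z ∈ X) (hzY : z ∈ Y), ψX ⟨z, hzX⟩ = ψY ⟨z, hzY⟩)
    (hψX : IsIrred (IndRep X (charRep ψX))) (hψY : IsIrred (IndRep Y (charRep ψY))) :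
    RepIso (IndRep X (charRep ψX)) (IndRep Y (charRep ψY)) :=
  repIso_indRep_of_isIrred hψX hψY fun g hgX hgY =>
    hagree g (hX.inf_le_center hY hXY ⟨hgX, hgY⟩) hgX hgY

end IsMaximalAbelian

/-- let `H` be the Heisenberg group over `𝔽_p` with center `Z` (of order
`p`), let `X`, `Y` be maximal abelian subgroups and `ψ_X`, `ψ_Y` one-dimensional
characters whose restrictions to `Z` agree and are nontrivial.  Then `Ind_X^H ψ_X` and
`Ind_Y^H ψ_Y` are isomorphic irreducible representations of `H` of dimension `p`. -/
theorem heisenberg_induced_characters [Fact p.Prime]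
    (X Y : Subgroup (Heis p)) (hX : IsMaximalAbelian X) (hY : IsMaximalAbelian Y)
    (ψX : X →* ℂˣ) (ψY : Y →* ℂˣ)
    (hagree : ∀ z : Heis p, z ∈ Subgroup.center (Heis p) →
      ∀ (hzX : z ∈ X) (hzY : z ∈ Y), ψX ⟨z, hzX⟩ = ψY ⟨z, hzY⟩)
    (hnontriv : ∃ z : Heis p, z ∈ Subgroup.center (Heis p) ∧
      ∃ hzX : z ∈ X, ψX ⟨z, hzX⟩ ≠ 1) :
    IsIrred (IndRep X (charRep ψX)) ∧ IsIrred (IndRep Y (charRep ψY)) ∧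
    RepIso (IndRep X (charRep ψX)) (IndRep Y (charRep ψY)) ∧
    Module.finrank ℂ (IndCar X (charRep ψX)) = p := by
  obtain ⟨z, hz, hzX, hψz⟩ := hnontriv
  have hIrrX := hX.isIrred_indRep ⟨z, hz, hzX, hψz⟩
  have hIrrY := hY.isIrred_indRep ⟨z, hz, hY.center_le hz, (hagree z hz hzX _).symm.trans_ne hψz⟩
  refine ⟨hIrrX, hIrrY, ?_, (finrank_indCar ψX).trans hX.index_eq⟩
  by_cases hXY : X = Y
  · obtain ⟨W, hW, hWX, ψW, hψW⟩ := hX.exists_ne ψX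
    have hIrrW := hW.isIrred_indRep ⟨z, hz, hW.center_le hz, (hψW z hz hzX _).symm.trans_ne hψz⟩
    refine (hX.repIso_indRep_of_ne hW hWX.symm hψW hIrrX hIrrW).trans
      (hW.repIso_indRep_of_ne hY (hXY ▸ hWX) (fun z hz hzW hzY => ?_) hIrrW hIrrY)
    exact (hψW z hz (hX.center_le hz) hzW).symm.trans (hagree z hz _ hzY)
  · exact hX.repIso_indRep_of_ne hY hXY hagree hIrrX hIrrY
end
end
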